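/- arXiv:1710.10479 — 7 statements merged into one kernel-verified Lean document; each statement's English description precedes it below -/
import Mathlib

section
/- For any real k ≠ 0 and nonzero real constants c, d, the function q(x,t) = -2kcd e^{-k²t}/(c² e^{kx} + d² e^{-kx}) satisfies the reverse-time nonlinear Schrödinger equation q_t(x,t) + q_{xx}(x,t) + 2 q(x,t)² q(x,-t) = 0 for all real x, t. -/
/-!
Write `q x t = a(t) / D(x)` with `a(t) = -2kcd e^{-k²t}` and `D(x) = c² e^{kx} + d² e^{-kx}`.
Then `D'' = k² D` and `D'² = k² (D² - 4c²d²)`, so `(1/D)'' = (2D'² - D D'')/D³ = k²/D - 8k²c²d²/D³`.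
The linear part `k²/D` cancels against `q_t = -k² q`, and the cubic part against the nonlocal term,
because `a(t)² a(-t) = 4k²c²d² a(t)`.
-/

open Real

theorem iteratedDeriv_two_inv {f f' f'' : ℝ → ℝ} (hf : ∀ y, HasDerivAt f (f' y) y)
    (hf' : ∀ y, HasDerivAt f' (f'' y) y) (hf0 : ∀ y, f y ≠ 0) (x : ℝ) :
    iteratedDeriv 2 (fun y => (f y)⁻¹) x = (2 * f' x ^ 2 - f x * f'' x) / f x ^ 3 := by
  have h_deriv : deriv (fun y => (f y)⁻¹) = fun y => -f' y / f y ^ 2 :=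
    funext fun y => ((hf y).inv (hf0 y)).deriv
  rw [iteratedDeriv_succ, iteratedDeriv_one, h_deriv,
    ((hf' x).fun_neg.fun_div ((hf x).fun_pow 2) (pow_ne_zero 2 (hf0 x))).deriv]
  have hfx : f x ≠ 0 := hf0 x
  field_simp
  ring

theorem hasDerivAt_mul_exp_add_mul_exp_neg (a b k y : ℝ) :
    HasDerivAt (fun y => a * exp (k * y) + b * exp (-(k * y)))
      (k * a * exp (k * y) + -(k * b) * exp (-(k * y))) y := by
  have h_pos := ((hasDerivAt_id' y).const_mul k).exp.const_mul a
  have h_neg := ((hasDerivAt_id' y).const_mul k).fun_neg.exp.const_mul b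
  exact (h_pos.fun_add h_neg).congr_deriv (by ring)

theorem stmt_7_general (k c d : ℝ) (hc : c ≠ 0)
    (q : ℝ → ℝ → ℝ)
    (hq : ∀ x t : ℝ, q x t =
      -2 * k * c * d * Real.exp (-k^2 * t) / (c^2 * Real.exp (k * x) + d^2 * Real.exp (-(k * x)))) :
    ∀ x t : ℝ,
      deriv (fun s => q x s) t + iteratedDeriv 2 (fun y => q y t) x
        + 2 * (q x t)^2 * q x (-t) = 0 := by
  intro x t
  have hD0 : ∀ y, c ^ 2 * exp (k * y) + d ^ 2 * exp (-(k * y)) ≠ 0 := fun y => by positivity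
  have h_time : HasDerivAt (fun s => q x s) (-k ^ 2 * q x t) t := by
    simp only [hq]
    exact ((((hasDerivAt_id' t).const_mul (-k ^ 2)).exp.const_mul (-2 * k * c * d)).div_const
      (c ^ 2 * exp (k * x) + d ^ 2 * exp (-(k * x)))).congr_deriv (by ring)
  have h_space : (fun y => q y t) = fun y =>
      -2 * k * c * d * exp (-k ^ 2 * t) * (c ^ 2 * exp (k * y) + d ^ 2 * exp (-(k * y)))⁻¹ := by
    funext y
    rw [hq, div_eq_mul_inv]
  rw [h_time.deriv, h_space, iteratedDeriv_const_mul_field,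
    iteratedDeriv_two_inv (hasDerivAt_mul_exp_add_mul_exp_neg _ _ k)
      (hasDerivAt_mul_exp_add_mul_exp_neg _ _ k) hD0, hq, hq]
  have h_reflect : exp (-k ^ 2 * -t) = (exp (-k ^ 2 * t))⁻¹ := by rw [← exp_neg]; ring_nf
  rw [h_reflect, exp_neg]
  field_simp
  ring

theorem stmt_7 (k c d : ℝ) (hk : k ≠ 0) (hc : c ≠ 0) (hd : d ≠ 0)
    (q : ℝ → ℝ → ℝ)
    (hq : ∀ x t : ℝ, q x t =
      -2 * k * c * d * Real.exp (-k^2 * t) / (c^2 * Real.exp (k * x) + d^2 * Real.exp (-(k * x)))) :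
    ∀ x t : ℝ,
      deriv (fun s => q x s) t + iteratedDeriv 2 (fun y => q y t) x
        + 2 * (q x t)^2 * q x (-t) = 0 :=
  stmt_7_general k c d hc q hq
end

section
/- For any real k ≠ 0, the function q(x,t) = 2k e^{-k²t}/(e^{kx} + e^{-kx}) satisfies the reverse space-time nonlinear Schrödinger equation q_t(x,t) + q_{xx}(x,t) + 2 q(x,t)² q(-x,-t) = 0 for all real x, t. -/
/-! Writing `e^{kx} + e^{-kx} = 2 cosh (kx)`, the solution is `q = k e^{-k²t} sech (kx)`.
Then `q_t = -k² q`, and `sech'' = sech - 2 sech³` gives `q_xx = k² q - 2 k³ e^{-k²t} sech³ (kx)`.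
Since `cosh` is even, `q(-x,-t) = k e^{k²t} sech (kx)`, so the nonlinear term is
`2 k³ e^{-k²t} sech³ (kx)` and everything cancels. -/

open Real

lemma hasDerivAt_inv_cosh_mul (k y : ℝ) :
    HasDerivAt (fun y => (cosh (k * y))⁻¹) (-k * sinh (k * y) / cosh (k * y) ^ 2) y :=
  ((hasDerivAt_const_mul k).cosh.fun_inv (cosh_pos (k * y)).ne').congr_deriv (by ring)

lemma iteratedDeriv_two_inv_cosh_mul (k y : ℝ) :
    iteratedDeriv 2 (fun y => (cosh (k * y))⁻¹) y
      = k ^ 2 * ((cosh (k * y))⁻¹ - 2 * (cosh (k * y))⁻¹ ^ 3) := by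
  have hk : HasDerivAt (fun y => k * y) k y := hasDerivAt_const_mul k
  have hfirst : deriv (fun y => (cosh (k * y))⁻¹) = fun y => -k * sinh (k * y) / cosh (k * y) ^ 2 :=
    funext fun y => (hasDerivAt_inv_cosh_mul k y).deriv
  rw [iteratedDeriv_succ, iteratedDeriv_one, hfirst, ((hk.sinh.const_mul (-k)).fun_div
    (hk.cosh.fun_pow 2) (pow_ne_zero 2 (cosh_pos (k * y)).ne')).deriv]
  field_simp
  linear_combination -2 * k ^ 2 * cosh (k * y) * cosh_sq (k * y)

lemma exp_add_exp_neg (a : ℝ) : exp a + exp (-a) = 2 * cosh a := by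
  rw [cosh_eq]; ring

theorem stmt_8_general (k : ℝ)
    (q : ℝ → ℝ → ℝ)
    (hq : ∀ x t : ℝ, q x t =
      2 * k * Real.exp (-k^2 * t) / (Real.exp (k * x) + Real.exp (-(k * x)))) :
    ∀ x t : ℝ,
      deriv (fun s => q x s) t + iteratedDeriv 2 (fun y => q y t) x
        + 2 * (q x t)^2 * q (-x) (-t) = 0 := by
  have hsech : q = fun x t => k * exp (-k ^ 2 * t) * (cosh (k * x))⁻¹ := by
    funext x t
    rw [hq, exp_add_exp_neg]
    field_simp
  intro x t
  simp only [hsech]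
  have hdt : HasDerivAt (fun s => k * exp (-k ^ 2 * s) * (cosh (k * x))⁻¹)
      (k * (exp (-k ^ 2 * t) * -k ^ 2) * (cosh (k * x))⁻¹) t :=
    (((hasDerivAt_const_mul (-k ^ 2)).exp).const_mul k).mul_const _
  rw [hdt.deriv, iteratedDeriv_const_mul_field, iteratedDeriv_two_inv_cosh_mul,
    mul_neg k x, cosh_neg, show -k ^ 2 * -t = -(-k ^ 2 * t) by ring, exp_neg]
  field_simp
  ring

theorem stmt_8 (k : ℝ) (hk : k ≠ 0)
    (q : ℝ → ℝ → ℝ)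
    (hq : ∀ x t : ℝ, q x t =
      2 * k * Real.exp (-k^2 * t) / (Real.exp (k * x) + Real.exp (-(k * x)))) :
    ∀ x t : ℝ,
      deriv (fun s => q x s) t + iteratedDeriv 2 (fun y => q y t) x
        + 2 * (q x t)^2 * q (-x) (-t) = 0 :=
  stmt_8_general k q hq
end

section
/- For real k ≠ 0, the function q(x,t) = 2k/(e^{kx + k³t} + e^{-kx - k³t}) = k sech(kx + k³t) satisfies the nonlocal (reverse space-time) mKdV equation q_{t}(x,t) = q_{xxx}(x,t) + 6 q(x,t) q_x(x,t) q(-x,-t) for all real x, t. -/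
/-!
Write `q x t = k * sech v` with `v = k * x + k ^ 3 * t`. The solution is a travelling wave and
`sech` is even, so `q (-x) (-t) = q x t`, and every derivative of `q` is a power of `k` times a
derivative of `sech` at `v`. After dividing by `k ^ 4` the equation becomes
`sech' = sech''' + 6 * sech ^ 2 * sech'`, which is the derivative of the stationary equation
`sech'' = sech - 2 * sech ^ 3`; the latter follows from `sinh ^ 2 = cosh ^ 2 - 1`.
-/

open Real

section Affine

variable {𝕜 : Type*} [NontriviallyNormedField 𝕜]

theorem deriv_comp_mul_add (f : 𝕜 → 𝕜) (a b x : 𝕜) :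
    deriv (fun y => f (a * y + b)) x = a * deriv f (a * x + b) := by
  rw [deriv_comp_mul_left a (fun z => f (z + b)), deriv_comp_add_const, smul_eq_mul]

theorem iteratedDeriv_comp_mul_add {n : ℕ} {f : 𝕜 → 𝕜} (hf : ContDiff 𝕜 n f) (a b x : 𝕜) :
    iteratedDeriv n (fun y => f (a * y + b)) x = a ^ n * iteratedDeriv n f (a * x + b) := by
  have hshift : ContDiff 𝕜 n (fun z => f (z + b)) := hf.comp (contDiff_id.add contDiff_const)
  rw [iteratedDeriv_comp_const_mul hshift a, iteratedDeriv_comp_add_const]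

end Affine

namespace Real

noncomputable def sech (u : ℝ) : ℝ := (cosh u)⁻¹

theorem sech_eq (u : ℝ) : sech u = 2 / (exp u + exp (-u)) := by
  rw [sech, cosh_eq, inv_div]

theorem sech_neg (u : ℝ) : sech (-u) = sech u := by
  rw [sech, sech, cosh_neg]

theorem contDiff_sech {n : WithTop ℕ∞} : ContDiff ℝ n sech :=
  contDiff_cosh.inv fun u => (cosh_pos u).ne'

theorem hasDerivAt_sech (u : ℝ) : HasDerivAt sech (-sinh u * sech u ^ 2) u :=
  ((hasDerivAt_cosh u).fun_inv (cosh_pos u).ne').congr_deriv <| by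
    rw [sech, div_eq_mul_inv, inv_pow]

theorem deriv_sech : deriv sech = fun u => -sinh u * sech u ^ 2 :=
  funext fun u => (hasDerivAt_sech u).deriv

theorem deriv_deriv_sech : deriv (deriv sech) = fun u => sech u - 2 * sech u ^ 3 := by
  funext u
  have h : HasDerivAt (fun u => -sinh u * sech u ^ 2) _ u :=
    (hasDerivAt_sinh u).fun_neg.mul ((hasDerivAt_sech u).fun_pow 2)
  rw [deriv_sech, h.deriv]
  have hc := (cosh_pos u).ne'
  simp only [sech, Nat.cast_ofNat, Nat.add_one_sub_one, pow_one]
  field_simp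
  linear_combination (-2) * cosh_sq u

theorem iteratedDeriv_three_sech (u : ℝ) :
    iteratedDeriv 3 sech u = deriv sech u * (1 - 6 * sech u ^ 2) := by
  have hw := hasDerivAt_sech u
  have h : HasDerivAt (fun u => sech u - 2 * sech u ^ 3) _ u :=
    hw.sub ((hw.fun_pow 3).const_mul 2)
  rw [iteratedDeriv_succ', iteratedDeriv_succ', iteratedDeriv_one, deriv_deriv_sech, h.deriv,
    hw.deriv]
  ring

end Real

theorem stmt_11_general (k : ℝ)
    (q : ℝ → ℝ → ℝ)
    (hq : ∀ x t : ℝ, q x t =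
      2 * k / (Real.exp (k * x + k^3 * t) + Real.exp (-(k * x + k^3 * t)))) :
    ∀ x t : ℝ,
      deriv (fun s => q x s) t =
        iteratedDeriv 3 (fun y => q y t) x
          + 6 * q x t * deriv (fun y => q y t) x * q (-x) (-t) := by
  have hq_sech : q = fun x t => k * sech (k * x + k ^ 3 * t) := by
    ext x t
    rw [hq, sech_eq]
    ring
  subst hq_sech
  intro x t
  have hq_t : deriv (fun s => k * sech (k * x + k ^ 3 * s)) t
      = k * (k ^ 3 * deriv sech (k * x + k ^ 3 * t)) := by
    simp_rw [add_comm (k * x)]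
    rw [deriv_const_mul_field, deriv_comp_mul_add]
  have hq_x : deriv (fun y => k * sech (k * y + k ^ 3 * t)) x
      = k * (k * deriv sech (k * x + k ^ 3 * t)) := by
    rw [deriv_const_mul_field, deriv_comp_mul_add]
  have hq_xxx : iteratedDeriv 3 (fun y => k * sech (k * y + k ^ 3 * t)) x
      = k * (k ^ 3 * iteratedDeriv 3 sech (k * x + k ^ 3 * t)) := by
    rw [iteratedDeriv_const_mul_field, iteratedDeriv_comp_mul_add contDiff_sech]
  have hq_reflect : k * sech (k * -x + k ^ 3 * -t) = k * sech (k * x + k ^ 3 * t) := by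
    rw [← sech_neg]
    ring_nf
  simp only [hq_t, hq_x, hq_xxx, hq_reflect, iteratedDeriv_three_sech]
  ring

theorem stmt_11 (k : ℝ) (hk : k ≠ 0)
    (q : ℝ → ℝ → ℝ)
    (hq : ∀ x t : ℝ, q x t =
      2 * k / (Real.exp (k * x + k^3 * t) + Real.exp (-(k * x + k^3 * t)))) :
    ∀ x t : ℝ,
      deriv (fun s => q x s) t =
        iteratedDeriv 3 (fun y => q y t) x
          + 6 * q x t * deriv (fun y => q y t) x * q (-x) (-t) :=
  stmt_11_general k q hq
end

section
/- For real k ≠ 0 and nonzero real c, d, the function q(x,t) = -2kcd/(c² e^{kx + k³t} + d² e^{-kx - k³t}) satisfies the mKdV equation q_t(x,t) = q_{xxx}(x,t) + 6 q(x,t)² q_x(x,t) for all real x, t. -/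
/-!
With `θ = k x + k³ t`, the solution is the travelling wave `q = -2kcd · g(θ)`, where
`g = 1 / D` and `D(θ) = c² e^θ + d² e^{-θ}`. Along the wave, `∂ₜ = k³ d/dθ` and `∂ₓ = k d/dθ`, so
the mKdV equation reduces to the profile ODE `g''' = g' (1 - 24 c² d² g²)`. Writing
`N(θ) = c² e^θ - d² e^{-θ}`, one has `D' = N`, `N' = D` and `D² - N² = 4 c² d²`; this turns the
direct computation `g'' = (2N² - D²) / D³` into `g'' = g - 8 c² d² g³`, and differentiating once
more gives the profile ODE.
-/

open Real

section AffineReparametrization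

variable {𝕜 F : Type*} [NontriviallyNormedField 𝕜] [NormedAddCommGroup F] [NormedSpace 𝕜 F]

theorem iteratedDeriv_comp_mul_add_const {n : ℕ} {f : 𝕜 → F} (hf : ContDiff 𝕜 n f)
    (a b x : 𝕜) :
    iteratedDeriv n (fun y => f (a * y + b)) x = a ^ n • iteratedDeriv n f (a * x + b) := by
  have hshift : ContDiff 𝕜 n (fun z => f (z + b)) := hf.comp (contDiff_id.add contDiff_const)
  rw [iteratedDeriv_comp_const_smul hshift a, iteratedDeriv_comp_add_const]

end AffineReparametrization

noncomputable def coshLike (c d θ : ℝ) : ℝ := c ^ 2 * exp θ + d ^ 2 * exp (-θ)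

noncomputable def sinhLike (c d θ : ℝ) : ℝ := c ^ 2 * exp θ - d ^ 2 * exp (-θ)

noncomputable def solitonProfile (c d θ : ℝ) : ℝ := (coshLike c d θ)⁻¹

section Profile

variable (c d : ℝ)

theorem coshLike_sq_sub_sinhLike_sq (θ : ℝ) :
    coshLike c d θ ^ 2 - sinhLike c d θ ^ 2 = 4 * c ^ 2 * d ^ 2 := by
  have hexp : exp θ * exp (-θ) = 1 := by rw [← exp_add, add_neg_cancel, exp_zero]
  unfold coshLike sinhLike
  linear_combination 4 * c ^ 2 * d ^ 2 * hexp

theorem hasDerivAt_coshLike (θ : ℝ) : HasDerivAt (coshLike c d) (sinhLike c d θ) θ := by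
  have h := ((hasDerivAt_exp θ).const_mul (c ^ 2)).fun_add
    (((hasDerivAt_neg θ).exp).const_mul (d ^ 2))
  refine h.congr_deriv ?_
  simp only [sinhLike]
  ring

theorem hasDerivAt_sinhLike (θ : ℝ) : HasDerivAt (sinhLike c d) (coshLike c d θ) θ := by
  have h := ((hasDerivAt_exp θ).const_mul (c ^ 2)).fun_sub
    (((hasDerivAt_neg θ).exp).const_mul (d ^ 2))
  refine h.congr_deriv ?_
  simp only [coshLike]
  ring

variable {c}

theorem coshLike_pos (hc : c ≠ 0) (θ : ℝ) : 0 < coshLike c d θ := by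
  unfold coshLike
  positivity

theorem contDiff_solitonProfile (hc : c ≠ 0) {n : WithTop ℕ∞} :
    ContDiff ℝ n (solitonProfile c d) := by
  have hD : ContDiff ℝ n (coshLike c d) := by unfold coshLike; fun_prop
  exact hD.inv fun θ => (coshLike_pos d hc θ).ne'

theorem hasDerivAt_solitonProfile (hc : c ≠ 0) (θ : ℝ) :
    HasDerivAt (solitonProfile c d) (-sinhLike c d θ / coshLike c d θ ^ 2) θ :=
  (hasDerivAt_coshLike c d θ).inv (coshLike_pos d hc θ).ne'

theorem deriv_deriv_solitonProfile (hc : c ≠ 0) :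
    deriv (deriv (solitonProfile c d)) =
      fun θ => solitonProfile c d θ - 8 * c ^ 2 * d ^ 2 * solitonProfile c d θ ^ 3 := by
  have hderiv : deriv (solitonProfile c d) = fun θ => -sinhLike c d θ / coshLike c d θ ^ 2 :=
    funext fun θ => (hasDerivAt_solitonProfile d hc θ).deriv
  funext θ
  have hD := (coshLike_pos d hc θ).ne'
  have h := (hasDerivAt_sinhLike c d θ).fun_neg.fun_div ((hasDerivAt_coshLike c d θ).fun_pow 2)
    (pow_ne_zero 2 hD)
  rw [hderiv, h.deriv, solitonProfile]
  field_simp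
  norm_num
  linear_combination (-2 * coshLike c d θ) * coshLike_sq_sub_sinhLike_sq c d θ

theorem iteratedDeriv_three_solitonProfile (hc : c ≠ 0) (θ : ℝ) :
    iteratedDeriv 3 (solitonProfile c d) θ =
      deriv (solitonProfile c d) θ * (1 - 24 * c ^ 2 * d ^ 2 * solitonProfile c d θ ^ 2) := by
  have hg := (contDiff_solitonProfile d hc (n := 1)).differentiable one_ne_zero θ
  have h := hg.hasDerivAt.fun_sub ((hg.hasDerivAt.fun_pow 3).const_mul (8 * c ^ 2 * d ^ 2))
  simp only [iteratedDeriv_eq_iterate, Function.iterate_succ_apply', Function.iterate_zero_apply]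
  rw [deriv_deriv_solitonProfile d hc, h.deriv]
  push_cast
  ring

end Profile

theorem stmt_12_general (k c d : ℝ) (hc : c ≠ 0)
    (q : ℝ → ℝ → ℝ)
    (hq : ∀ x t : ℝ, q x t =
      -2 * k * c * d / (c^2 * Real.exp (k * x + k^3 * t) + d^2 * Real.exp (-(k * x + k^3 * t)))) :
    ∀ x t : ℝ,
      deriv (fun s => q x s) t =
        iteratedDeriv 3 (fun y => q y t) x + 6 * (q x t)^2 * deriv (fun y => q y t) x := by
  obtain rfl : q = fun x t => -2 * k * c * d * solitonProfile c d (k * x + k ^ 3 * t) :=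
    funext₂ fun x t => by rw [hq, div_eq_mul_inv]; rfl
  intro x t
  have htime := iteratedDeriv_comp_mul_add_const (contDiff_solitonProfile d hc (n := 1))
    (k ^ 3) (k * x) t
  have hspace₁ := iteratedDeriv_comp_mul_add_const (contDiff_solitonProfile d hc (n := 1))
    k (k ^ 3 * t) x
  have hspace₃ := iteratedDeriv_comp_mul_add_const (contDiff_solitonProfile d hc (n := 3))
    k (k ^ 3 * t) x
  simp only [iteratedDeriv_one, smul_eq_mul] at htime hspace₁ hspace₃
  simp only [deriv_const_mul_field', iteratedDeriv_const_mul_field]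
  simp only [add_comm (k * x)] at htime ⊢
  rw [htime, hspace₁, hspace₃, add_comm (k ^ 3 * t), iteratedDeriv_three_solitonProfile d hc]
  ring

theorem stmt_12 (k c d : ℝ) (hk : k ≠ 0) (hc : c ≠ 0) (hd : d ≠ 0)
    (q : ℝ → ℝ → ℝ)
    (hq : ∀ x t : ℝ, q x t =
      -2 * k * c * d / (c^2 * Real.exp (k * x + k^3 * t) + d^2 * Real.exp (-(k * x + k^3 * t)))) :
    ∀ x t : ℝ,
      deriv (fun s => q x s) t =
        iteratedDeriv 3 (fun y => q y t) x + 6 * (q x t)^2 * deriv (fun y => q y t) x :=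
  stmt_12_general k c d hc q hq
end

section
/- For real k ≠ 0, the functions q(x,t) = 2k sech(2kx + t/(2k)) and s(x,t) = q_{xt}(x,t)/(2q(x,t)) satisfy both q_{xt}(x,t) = 2 q(x,t) s(x,t) and s_x(x,t) + ∂/∂t[q(x,t) q(-x,-t)] = 0 for all real x, t. -/
open Real

private lemma aux_affine (a b x : ℝ) : HasDerivAt (fun y => a * y + b) a x := by
  simpa using ((hasDerivAt_id x).const_mul a).add_const b

private lemma aux_affine2 (c d x : ℝ) : HasDerivAt (fun y => c + y / d) d⁻¹ x := by
  simpa [one_div] using ((hasDerivAt_id x).div_const d).const_add c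

private lemma aux_cne (y : ℝ) : Real.cosh y ≠ 0 := (Real.cosh_pos y).ne'

private lemma aux_cosh (a b x : ℝ) :
    HasDerivAt (fun y => Real.cosh (a * y + b)) (Real.sinh (a * x + b) * a) x :=
  (Real.hasDerivAt_cosh _).comp x (aux_affine a b x)

private lemma aux_cosh2 (c d x : ℝ) :
    HasDerivAt (fun y => Real.cosh (c + y / d)) (Real.sinh (c + x / d) * d⁻¹) x :=
  (Real.hasDerivAt_cosh _).comp x (aux_affine2 c d x)

private lemma aux_sinh2 (c d x : ℝ) :
    HasDerivAt (fun y => Real.sinh (c + y / d)) (Real.cosh (c + x / d) * d⁻¹) x :=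
  (Real.hasDerivAt_sinh _).comp x (aux_affine2 c d x)

private lemma aux_sechD (a b x : ℝ) :
    HasDerivAt (fun y => (Real.cosh (a * y + b))⁻¹)
      (-(Real.sinh (a * x + b) * a) / Real.cosh (a * x + b) ^ 2) x :=
  (aux_cosh a b x).inv (aux_cne _)

private lemma aux_sechD2 (c d x : ℝ) :
    HasDerivAt (fun y => (Real.cosh (c + y / d))⁻¹)
      (-(Real.sinh (c + x / d) * d⁻¹) / Real.cosh (c + x / d) ^ 2) x :=
  (aux_cosh2 c d x).inv (aux_cne _)

theorem stmt_15 (k : ℝ) (hk : k ≠ 0)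
    (sech : ℝ → ℝ) (hsech : ∀ y, sech y = 2 / (Real.exp y + Real.exp (-y)))
    (q s : ℝ → ℝ → ℝ)
    (hq : ∀ x t : ℝ, q x t = 2 * k * sech (2 * k * x + t / (2 * k)))
    (hs : ∀ x t : ℝ, s x t = deriv (fun τ => deriv (fun y => q y τ) x) t / (2 * q x t)) :
    ∀ x t : ℝ,
      deriv (fun τ => deriv (fun y => q y τ) x) t = 2 * q x t * s x t ∧
      deriv (fun y => s y t) x + deriv (fun τ => q x τ * q (-x) (-τ)) t = 0 := by
  have hsech' : ∀ y, sech y = (Real.cosh y)⁻¹ := by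
    intro y
    have h : Real.exp y + Real.exp (-y) > 0 := by positivity
    rw [hsech, Real.cosh_eq]
    field_simp
  have hq' : ∀ x t : ℝ, q x t = 2 * k * (Real.cosh (2 * k * x + t / (2 * k)))⁻¹ := by
    intro x t; rw [hq, hsech']
  -- value of inner derivative
  have hinner : ∀ x τ : ℝ, HasDerivAt (fun y => q y τ)
      (2 * k * (-(Real.sinh (2 * k * x + τ / (2 * k)) * (2 * k)) /
        Real.cosh (2 * k * x + τ / (2 * k)) ^ 2)) x := by
    intro x τ
    have hfun : (fun y => q y τ) = fun y => 2 * k * (Real.cosh (2 * k * y + τ / (2 * k)))⁻¹ := by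
      funext y; exact hq' y τ
    rw [hfun]
    exact (aux_sechD (2 * k) (τ / (2 * k)) x).const_mul (2 * k)
  -- value of mixed derivative q_xt
  have houter : ∀ x t : ℝ, HasDerivAt (fun τ => deriv (fun y => q y τ) x)
      (2 * k * ((-(Real.cosh (2 * k * x + t / (2 * k)) * (2 * k)⁻¹ * (2 * k)) *
          Real.cosh (2 * k * x + t / (2 * k)) ^ 2 -
        -(Real.sinh (2 * k * x + t / (2 * k)) * (2 * k)) *
          (2 * Real.cosh (2 * k * x + t / (2 * k)) ^ 1 *
            (Real.sinh (2 * k * x + t / (2 * k)) * (2 * k)⁻¹))) /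
        (Real.cosh (2 * k * x + t / (2 * k)) ^ 2) ^ 2)) t := by
    intro x t
    have hfun : (fun τ => deriv (fun y => q y τ) x) =
        fun τ => 2 * k * (-(Real.sinh (2 * k * x + τ / (2 * k)) * (2 * k)) /
          Real.cosh (2 * k * x + τ / (2 * k)) ^ 2) := by
      funext τ; exact (hinner x τ).deriv
    rw [hfun]
    have hnum : HasDerivAt (fun τ => -(Real.sinh (2 * k * x + τ / (2 * k)) * (2 * k)))
        (-(Real.cosh (2 * k * x + t / (2 * k)) * (2 * k)⁻¹ * (2 * k))) t :=
      ((aux_sinh2 (2 * k * x) (2 * k) t).mul_const (2 * k)).neg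
    have hden : HasDerivAt (fun τ => Real.cosh (2 * k * x + τ / (2 * k)) ^ 2)
        (2 * Real.cosh (2 * k * x + t / (2 * k)) ^ 1 *
          (Real.sinh (2 * k * x + t / (2 * k)) * (2 * k)⁻¹)) t :=
      (aux_cosh2 (2 * k * x) (2 * k) t).pow 2
    exact ((hnum.div hden (pow_ne_zero 2 (aux_cne _)))).const_mul (2 * k)
  -- explicit value of s
  have hsval : ∀ x t : ℝ, s x t = 1 / 2 - ((Real.cosh (2 * k * x + t / (2 * k)))⁻¹) ^ 2 := by
    intro x t
    rw [hs, (houter x t).deriv, hq' x t]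
    set u := 2 * k * x + t / (2 * k) with hu
    have hc := aux_cne u
    have hsq := Real.sinh_sq u
    set C := Real.cosh u with hC
    set S := Real.sinh u with hS
    field_simp
    linear_combination 2 * hsq
  intro x t
  set u := 2 * k * x + t / (2 * k) with hu
  have hc := aux_cne u
  constructor
  · have hqne : q x t ≠ 0 := by
      rw [hq' x t]
      exact mul_ne_zero (by simpa using hk) (inv_ne_zero hc)
    rw [hs]
    field_simp
  · -- s_x
    have hsx : HasDerivAt (fun y => s y t)
        (-(2 * ((Real.cosh (2 * k * x + t / (2 * k)))⁻¹) ^ 1 *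
          (-(Real.sinh (2 * k * x + t / (2 * k)) * (2 * k)) /
            Real.cosh (2 * k * x + t / (2 * k)) ^ 2))) x := by
      have hfun : (fun y => s y t) =
          fun y => 1 / 2 - ((Real.cosh (2 * k * y + t / (2 * k)))⁻¹) ^ 2 := by
        funext y; exact hsval y t
      rw [hfun]
      exact ((aux_sechD (2 * k) (t / (2 * k)) x).pow 2).const_sub (1 / 2)
    -- product derivative
    have hprod : HasDerivAt (fun τ => q x τ * q (-x) (-τ))
        (4 * k ^ 2 * (2 * ((Real.cosh (2 * k * x + t / (2 * k)))⁻¹) ^ 1 *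
          (-(Real.sinh (2 * k * x + t / (2 * k)) * (2 * k)⁻¹) /
            Real.cosh (2 * k * x + t / (2 * k)) ^ 2))) t := by
      have hfun : (fun τ => q x τ * q (-x) (-τ)) =
          fun τ => 4 * k ^ 2 * ((Real.cosh (2 * k * x + τ / (2 * k)))⁻¹) ^ 2 := by
        funext τ
        rw [hq' x τ, hq' (-x) (-τ)]
        have harg : 2 * k * (-x) + -τ / (2 * k) = -(2 * k * x + τ / (2 * k)) := by ring
        rw [harg, Real.cosh_neg]
        ring
      rw [hfun]
      exact ((aux_sechD2 (2 * k * x) (2 * k) t).pow 2).const_mul (4 * k ^ 2)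
    rw [hsx.deriv, hprod.deriv]
    field_simp
    ring
end

section
/- Let 0 < k₁ < k₂ and c₁, c₂, d₁, d₂ nonzero reals with c₁c₂d₁d₂ < 0, and let q(x,t) = A/B be the 2-soliton solution of the reverse-time NLS equation, with A = 2(k₁² - k₂²)[c₁d₁k₁ e^{k₂²t + k₁x}(d₂² + c₂² e^{2k₂x}) - c₂d₂k₂ e^{k₁²t + k₂x}(d₁² + c₁² e^{2k₁x})] and B = 4c₁c₂d₁d₂k₁k₂ e^{(k₁+k₂)x}(e^{2k₁²t} + e^{2k₂²t}) - e^{(k₁²+k₂²)t}[c₁² e^{2k₁x}(c₂²(k₁-k₂)² e^{2k₂x} + d₂²(k₁+k₂)²) + d₁²(d₂²(k₁-k₂)² + c₂²(k₁+k₂)² e^{2k₂x})]. Then along the line x = y - (k₂-k₁)t with y fixed, e^{k₁k₂t} q(y - (k₂-k₁)t, t) converges as t → +∞ to 2k₁(k₂² - k₁²)c₁d₂ / ((k₂-k₁)² d₁d₂ e^{-k₁y} - 4k₁k₂ c₁c₂ e^{k₂y}). -/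
open Filter

lemma aux_exp_tendsto_zero (α β : ℝ) (hα : α < 0) :
    Tendsto (fun t : ℝ => Real.exp (α * t + β)) atTop (nhds 0) := by
  have h1 : Tendsto (fun t : ℝ => α * t + β) atTop atBot :=
    tendsto_atBot_add_const_right _ β ((tendsto_const_mul_atBot_of_neg hα).2 tendsto_id)
  exact Real.tendsto_exp_atBot.comp h1

theorem stmt_18 (k₁ k₂ c₁ c₂ d₁ d₂ : ℝ) (hk : 0 < k₁) (hk' : k₁ < k₂)
    (hc₁ : c₁ ≠ 0) (hc₂ : c₂ ≠ 0) (hd₁ : d₁ ≠ 0) (hd₂ : d₂ ≠ 0)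
    (hneg : c₁ * c₂ * d₁ * d₂ < 0)
    (A B q : ℝ → ℝ → ℝ)
    (hA : ∀ x t : ℝ, A x t =
      2 * (k₁^2 - k₂^2) *
        (c₁ * d₁ * k₁ * Real.exp (k₂^2 * t + k₁ * x) * (d₂^2 + c₂^2 * Real.exp (2 * k₂ * x))
          - c₂ * d₂ * k₂ * Real.exp (k₁^2 * t + k₂ * x) * (d₁^2 + c₁^2 * Real.exp (2 * k₁ * x))))
    (hB : ∀ x t : ℝ, B x t =
      4 * c₁ * c₂ * d₁ * d₂ * k₁ * k₂ * Real.exp ((k₁ + k₂) * x) *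
          (Real.exp (2 * k₁^2 * t) + Real.exp (2 * k₂^2 * t))
        - Real.exp ((k₁^2 + k₂^2) * t) *
          (c₁^2 * Real.exp (2 * k₁ * x) *
              (c₂^2 * (k₁ - k₂)^2 * Real.exp (2 * k₂ * x) + d₂^2 * (k₁ + k₂)^2)
            + d₁^2 * (d₂^2 * (k₁ - k₂)^2 + c₂^2 * (k₁ + k₂)^2 * Real.exp (2 * k₂ * x))))
    (hq : ∀ x t : ℝ, q x t = A x t / B x t) :
    ∀ y : ℝ,
      Tendsto (fun t : ℝ => Real.exp (k₁ * k₂ * t) * q (y - (k₂ - k₁) * t) t) atTop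
        (nhds (2 * k₁ * (k₂^2 - k₁^2) * c₁ * d₂ /
          ((k₂ - k₁)^2 * d₁ * d₂ * Real.exp (-k₁ * y) - 4 * k₁ * k₂ * c₁ * c₂ * Real.exp (k₂ * y)))) := by
  intro y
  have hk₂ : 0 < k₂ := hk.trans hk'
  set N : ℝ → ℝ := fun t =>
    2 * (k₁^2 - k₂^2) *
      (c₁ * d₁ * k₁ * d₂^2 * Real.exp (k₁ * y)
        + c₁ * d₁ * k₁ * c₂^2 * Real.exp ((2*k₁*k₂ - 2*k₂^2) * t + (k₁ + 2*k₂) * y)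
        - c₂ * d₂ * k₂ * d₁^2 * Real.exp ((2*k₁*k₂ - 2*k₂^2) * t + k₂ * y)
        - c₂ * d₂ * k₂ * c₁^2 * Real.exp ((2*k₁^2 - 2*k₂^2) * t + (2*k₁ + k₂) * y)) with hN
  set D : ℝ → ℝ := fun t =>
    4 * c₁ * c₂ * d₁ * d₂ * k₁ * k₂ *
        (Real.exp ((2*k₁^2 - 2*k₂^2) * t + (k₁ + k₂) * y) + Real.exp ((k₁ + k₂) * y))
      - (c₁^2 * c₂^2 * (k₁ - k₂)^2 * Real.exp ((2*k₁^2 - 2*k₂^2) * t + (2*k₁ + 2*k₂) * y)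
        + c₁^2 * d₂^2 * (k₁ + k₂)^2 * Real.exp ((2*k₁^2 - 2*k₁*k₂) * t + 2*k₁ * y)
        + d₁^2 * d₂^2 * (k₁ - k₂)^2
        + d₁^2 * c₂^2 * (k₁ + k₂)^2 * Real.exp ((2*k₁*k₂ - 2*k₂^2) * t + 2*k₂ * y)) with hD
  have key : ∀ t : ℝ, Real.exp (k₁ * k₂ * t) * q (y - (k₂ - k₁) * t) t = N t / D t := by
    intro t
    set x : ℝ := y - (k₂ - k₁) * t with hx
    have hE : Real.exp (-(k₁^2 + k₂^2) * t) ≠ 0 := Real.exp_ne_zero _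
    rw [hq, hA, hB]
    rw [mul_div_assoc', ← mul_div_mul_left _ _ hE]
    have comb : ∀ a b c : ℝ, Real.exp a * Real.exp b * Real.exp c = Real.exp (a + b + c) := by
      intro a b c; rw [← Real.exp_add, ← Real.exp_add]
    have comb4 : ∀ a b c d : ℝ,
        Real.exp a * Real.exp b * Real.exp c * Real.exp d = Real.exp (a + b + c + d) := by
      intro a b c d; rw [← Real.exp_add, ← Real.exp_add, ← Real.exp_add]
    have comb2 : ∀ a b : ℝ, Real.exp a * Real.exp b = Real.exp (a + b) := fun a b =>
      (Real.exp_add a b).symm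
    congr 1
    · have e1 : Real.exp (-(k₁^2 + k₂^2) * t) * Real.exp (k₁ * k₂ * t) *
          Real.exp (k₂^2 * t + k₁ * x) = Real.exp (k₁ * y) := by
        rw [comb]; congr 1; rw [hx]; ring
      have e2 : Real.exp (-(k₁^2 + k₂^2) * t) * Real.exp (k₁ * k₂ * t) *
          Real.exp (k₂^2 * t + k₁ * x) * Real.exp (2 * k₂ * x) =
          Real.exp ((2*k₁*k₂ - 2*k₂^2) * t + (k₁ + 2*k₂) * y) := by
        rw [comb4]; congr 1; rw [hx]; ring
      have e3 : Real.exp (-(k₁^2 + k₂^2) * t) * Real.exp (k₁ * k₂ * t) *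
          Real.exp (k₁^2 * t + k₂ * x) = Real.exp ((2*k₁*k₂ - 2*k₂^2) * t + k₂ * y) := by
        rw [comb]; congr 1; rw [hx]; ring
      have e4 : Real.exp (-(k₁^2 + k₂^2) * t) * Real.exp (k₁ * k₂ * t) *
          Real.exp (k₁^2 * t + k₂ * x) * Real.exp (2 * k₁ * x) =
          Real.exp ((2*k₁^2 - 2*k₂^2) * t + (2*k₁ + k₂) * y) := by
        rw [comb4]; congr 1; rw [hx]; ring
      rw [hN]
      linear_combination (2*(k₁^2 - k₂^2)*(c₁*d₁*k₁*d₂^2)) * e1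
        + (2*(k₁^2 - k₂^2)*(c₁*d₁*k₁*c₂^2)) * e2
        - (2*(k₁^2 - k₂^2)*(c₂*d₂*k₂*d₁^2)) * e3
        - (2*(k₁^2 - k₂^2)*(c₂*d₂*k₂*c₁^2)) * e4
    · have f1 : Real.exp (-(k₁^2 + k₂^2) * t) * Real.exp ((k₁ + k₂) * x) *
          Real.exp (2 * k₁^2 * t) = Real.exp ((2*k₁^2 - 2*k₂^2) * t + (k₁ + k₂) * y) := by
        rw [comb]; congr 1; rw [hx]; ring
      have f2 : Real.exp (-(k₁^2 + k₂^2) * t) * Real.exp ((k₁ + k₂) * x) *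
          Real.exp (2 * k₂^2 * t) = Real.exp ((k₁ + k₂) * y) := by
        rw [comb]; congr 1; rw [hx]; ring
      have f3 : Real.exp (-(k₁^2 + k₂^2) * t) * Real.exp ((k₁^2 + k₂^2) * t) *
          Real.exp (2 * k₁ * x) * Real.exp (2 * k₂ * x) =
          Real.exp ((2*k₁^2 - 2*k₂^2) * t + (2*k₁ + 2*k₂) * y) := by
        rw [comb4]; congr 1; rw [hx]; ring
      have f4 : Real.exp (-(k₁^2 + k₂^2) * t) * Real.exp ((k₁^2 + k₂^2) * t) *
          Real.exp (2 * k₁ * x) = Real.exp ((2*k₁^2 - 2*k₁*k₂) * t + 2*k₁ * y) := by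
        rw [comb]; congr 1; rw [hx]; ring
      have f5 : Real.exp (-(k₁^2 + k₂^2) * t) * Real.exp ((k₁^2 + k₂^2) * t) = 1 := by
        rw [comb2, ← Real.exp_zero]; congr 1; ring
      have f6 : Real.exp (-(k₁^2 + k₂^2) * t) * Real.exp ((k₁^2 + k₂^2) * t) *
          Real.exp (2 * k₂ * x) = Real.exp ((2*k₁*k₂ - 2*k₂^2) * t + 2*k₂ * y) := by
        rw [comb]; congr 1; rw [hx]; ring
      rw [hD]
      linear_combination (4*c₁*c₂*d₁*d₂*k₁*k₂) * f1 + (4*c₁*c₂*d₁*d₂*k₁*k₂) * f2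
        - (c₁^2*c₂^2*(k₁ - k₂)^2) * f3 - (c₁^2*d₂^2*(k₁ + k₂)^2) * f4
        - (d₁^2*d₂^2*(k₁ - k₂)^2) * f5 - (d₁^2*c₂^2*(k₁ + k₂)^2) * f6
  have hα₁ : 2*k₁*k₂ - 2*k₂^2 < 0 := by nlinarith
  have hα₂ : 2*k₁^2 - 2*k₂^2 < 0 := by nlinarith
  have hα₃ : 2*k₁^2 - 2*k₁*k₂ < 0 := by nlinarith
  have hNlim : Tendsto N atTop (nhds (2 * (k₁^2 - k₂^2) *
      (c₁ * d₁ * k₁ * d₂^2 * Real.exp (k₁ * y)))) := by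
    rw [hN]
    have := (((tendsto_const_nhds (x := c₁ * d₁ * k₁ * d₂^2 * Real.exp (k₁ * y))
        (f := atTop (α := ℝ))).add
        ((aux_exp_tendsto_zero _ ((k₁ + 2*k₂) * y) hα₁).const_mul (c₁ * d₁ * k₁ * c₂^2))).sub
        ((aux_exp_tendsto_zero _ (k₂ * y) hα₁).const_mul (c₂ * d₂ * k₂ * d₁^2))).sub
        ((aux_exp_tendsto_zero _ ((2*k₁ + k₂) * y) hα₂).const_mul (c₂ * d₂ * k₂ * c₁^2))
    have := this.const_mul (2 * (k₁^2 - k₂^2))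
    simpa using this
  have hDlim : Tendsto D atTop (nhds (4 * c₁ * c₂ * d₁ * d₂ * k₁ * k₂ * Real.exp ((k₁ + k₂) * y)
      - d₁^2 * d₂^2 * (k₁ - k₂)^2)) := by
    rw [hD]
    have h1 := ((aux_exp_tendsto_zero _ ((k₁ + k₂) * y) hα₂).add
        (tendsto_const_nhds (x := Real.exp ((k₁ + k₂) * y)) (f := atTop (α := ℝ)))).const_mul
        (4 * c₁ * c₂ * d₁ * d₂ * k₁ * k₂)
    have h2 := ((((aux_exp_tendsto_zero _ ((2*k₁ + 2*k₂) * y) hα₂).const_mul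
        (c₁^2 * c₂^2 * (k₁ - k₂)^2)).add
        ((aux_exp_tendsto_zero _ (2*k₁ * y) hα₃).const_mul (c₁^2 * d₂^2 * (k₁ + k₂)^2))).add
        (tendsto_const_nhds (x := d₁^2 * d₂^2 * (k₁ - k₂)^2) (f := atTop (α := ℝ)))).add
        ((aux_exp_tendsto_zero _ (2*k₂ * y) hα₁).const_mul (d₁^2 * c₂^2 * (k₁ + k₂)^2))
    have := h1.sub h2
    simpa using this
  have g1 : Real.exp (-k₁ * y) * Real.exp (k₁ * y) = 1 := by
    rw [← Real.exp_add]; simp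
  have g2 : Real.exp (k₂ * y) * Real.exp (k₁ * y) = Real.exp ((k₁ + k₂) * y) := by
    rw [← Real.exp_add]; ring_nf
  have hRel : 4 * c₁ * c₂ * d₁ * d₂ * k₁ * k₂ * Real.exp ((k₁ + k₂) * y)
      - d₁^2 * d₂^2 * (k₁ - k₂)^2 =
      -(((k₂ - k₁)^2 * d₁ * d₂ * Real.exp (-k₁ * y)
        - 4 * k₁ * k₂ * c₁ * c₂ * Real.exp (k₂ * y)) * (d₁ * d₂ * Real.exp (k₁ * y))) := by
    linear_combination ((k₂ - k₁)^2 * d₁^2 * d₂^2) * g1 - (4 * k₁ * k₂ * c₁ * c₂ * d₁ * d₂) * g2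
  have hLD : 4 * c₁ * c₂ * d₁ * d₂ * k₁ * k₂ * Real.exp ((k₁ + k₂) * y)
      - d₁^2 * d₂^2 * (k₁ - k₂)^2 < 0 := by
    have h1 : 4 * c₁ * c₂ * d₁ * d₂ * k₁ * k₂ * Real.exp ((k₁ + k₂) * y) < 0 := by
      have hkk : (0:ℝ) < k₁ * k₂ := mul_pos hk hk₂
      have : c₁ * c₂ * d₁ * d₂ * (k₁ * k₂) < 0 := mul_neg_of_neg_of_pos hneg hkk
      nlinarith [Real.exp_pos ((k₁ + k₂) * y)]
    have h2 : 0 < d₁^2 * d₂^2 * (k₁ - k₂)^2 := by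
      have : k₁ - k₂ ≠ 0 := sub_ne_zero.mpr (ne_of_lt hk')
      positivity
    linarith
  have hLDne : 4 * c₁ * c₂ * d₁ * d₂ * k₁ * k₂ * Real.exp ((k₁ + k₂) * y)
      - d₁^2 * d₂^2 * (k₁ - k₂)^2 ≠ 0 := ne_of_lt hLD
  have hT : (k₂ - k₁)^2 * d₁ * d₂ * Real.exp (-k₁ * y)
      - 4 * k₁ * k₂ * c₁ * c₂ * Real.exp (k₂ * y) ≠ 0 := by
    intro h
    rw [h, zero_mul, neg_zero] at hRel
    exact hLDne hRel
  have hfinal : (2 * (k₁^2 - k₂^2) * (c₁ * d₁ * k₁ * d₂^2 * Real.exp (k₁ * y))) /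
      (4 * c₁ * c₂ * d₁ * d₂ * k₁ * k₂ * Real.exp ((k₁ + k₂) * y)
        - d₁^2 * d₂^2 * (k₁ - k₂)^2)
      = 2 * k₁ * (k₂^2 - k₁^2) * c₁ * d₂ /
        ((k₂ - k₁)^2 * d₁ * d₂ * Real.exp (-k₁ * y)
          - 4 * k₁ * k₂ * c₁ * c₂ * Real.exp (k₂ * y)) := by
    rw [div_eq_div_iff hLDne hT]
    linear_combination (-(2 * k₁ * (k₂^2 - k₁^2) * c₁ * d₂)) * hRel
  have := hNlim.div hDlim hLDne
  rw [hfinal] at this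
  exact this.congr fun t => (key t).symm
end

section
/- Let k₁, k₂ be nonzero reals with k₁k₂ < 0 and 0 < -k₁ < k₂, and let q(x,t) = A'/B' with A' = (1/2)(k₂² - k₁²) e^{-(k₁+k₂)x}[e^{k₂²t + k₁x}(1 + e^{2k₂x})k₁ - e^{k₁²t + k₂x}(1 + e^{2k₁x})k₂] and B' = (e^{2k₁²t} + e^{2k₂²t})k₁k₂ + e^{(k₁²+k₂²)t}[2k₁k₂ sinh(k₁x) sinh(k₂x) - (k₁² + k₂²) cosh(k₁x) cosh(k₂x)]. Then along the line x = y - (k₁+k₂)t with y fixed, e^{-k₁k₂t} q(y - (k₁+k₂)t, t) converges as t → +∞ to 2k₁(k₁² - k₂²)/((k₁+k₂)² e^{k₁y} - 4k₁k₂ e^{k₂y}). -/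
set_option maxHeartbeats 800000

open Filter

theorem stmt_19 (k₁ k₂ : ℝ) (hk₁ : k₁ ≠ 0) (hk₂ : k₂ ≠ 0) (hneg : k₁ * k₂ < 0)
    (hord : 0 < -k₁) (hord' : -k₁ < k₂)
    (A' B' q : ℝ → ℝ → ℝ)
    (hA : ∀ x t : ℝ, A' x t =
      (1/2) * (k₂^2 - k₁^2) * Real.exp (-(k₁ + k₂) * x) *
        (Real.exp (k₂^2 * t + k₁ * x) * (1 + Real.exp (2 * k₂ * x)) * k₁
          - Real.exp (k₁^2 * t + k₂ * x) * (1 + Real.exp (2 * k₁ * x)) * k₂))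
    (hB : ∀ x t : ℝ, B' x t =
      (Real.exp (2 * k₁^2 * t) + Real.exp (2 * k₂^2 * t)) * k₁ * k₂
        + Real.exp ((k₁^2 + k₂^2) * t) *
          (2 * k₁ * k₂ * Real.sinh (k₁ * x) * Real.sinh (k₂ * x)
            - (k₁^2 + k₂^2) * Real.cosh (k₁ * x) * Real.cosh (k₂ * x)))
    (hq : ∀ x t : ℝ, q x t = A' x t / B' x t) :
    ∀ y : ℝ,
      Tendsto (fun t : ℝ => Real.exp (-(k₁ * k₂) * t) * q (y - (k₁ + k₂) * t) t) atTop
        (nhds (2 * k₁ * (k₁^2 - k₂^2) /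
          ((k₁ + k₂)^2 * Real.exp (k₁ * y) - 4 * k₁ * k₂ * Real.exp (k₂ * y)))) := by
  intro y
  have hk1n : k₁ < 0 := by linarith
  have hk2p : 0 < k₂ := by linarith
  have hs : 0 < k₁ + k₂ := by linarith
  -- decaying rate lemma
  have hexp : ∀ r : ℝ, r < 0 → Tendsto (fun t : ℝ => Real.exp (r * t)) atTop (nhds 0) := by
    intro r hr
    exact Real.tendsto_exp_atBot.comp ((tendsto_const_mul_atBot_of_neg hr).2 tendsto_id)
  have hra : (-2*k₁*k₂ - 2*k₂^2 : ℝ) < 0 := by nlinarith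
  have hrb : (2*k₁^2 - 2*k₂^2 : ℝ) < 0 := by nlinarith
  have hrc : (2*k₁^2 + 2*k₁*k₂ : ℝ) < 0 := by nlinarith
  -- numerator closed form
  have hgt : ∀ t : ℝ,
      Real.exp ((-2*k₂^2 - k₁*k₂)*t) * A' (y - (k₁+k₂)*t) t
      = (1/2)*(k₂^2-k₁^2)*k₁*Real.exp (-(k₂*y))
        + ((1/2)*(k₂^2-k₁^2)*k₁*Real.exp (k₂*y)) * Real.exp ((-2*k₁*k₂ - 2*k₂^2)*t)
        - ((1/2)*(k₂^2-k₁^2)*k₂*Real.exp (-(k₁*y))) * Real.exp ((2*k₁^2 - 2*k₂^2)*t)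
        - ((1/2)*(k₂^2-k₁^2)*k₂*Real.exp (k₁*y)) * Real.exp ((-2*k₁*k₂ - 2*k₂^2)*t) := by
    intro t
    rw [hA]
    rw [show (-2*k₂^2 - k₁*k₂)*t = -(k₂^2*t + (k₂^2*t + k₁*k₂*t)) by ring,
        show -(k₁ + k₂) * (y - (k₁+k₂)*t) = (k₁^2*t + (k₂^2*t + (k₁*k₂*t + k₁*k₂*t))) - (k₁*y + k₂*y) by ring,
        show k₂^2 * t + k₁ * (y - (k₁+k₂)*t) = (k₁*y + k₂^2*t) - (k₁^2*t + k₁*k₂*t) by ring,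
        show 2 * k₂ * (y - (k₁+k₂)*t) = (k₂*y + k₂*y) - (k₂^2*t + (k₂^2*t + (k₁*k₂*t + k₁*k₂*t))) by ring,
        show k₁^2 * t + k₂ * (y - (k₁+k₂)*t) = (k₂*y + k₁^2*t) - (k₂^2*t + k₁*k₂*t) by ring,
        show 2 * k₁ * (y - (k₁+k₂)*t) = (k₁*y + k₁*y) - (k₁^2*t + (k₁^2*t + (k₁*k₂*t + k₁*k₂*t))) by ring,
        show (-2*k₁*k₂ - 2*k₂^2)*t = -(k₁*k₂*t + (k₁*k₂*t + (k₂^2*t + k₂^2*t))) by ring,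
        show (2*k₁^2 - 2*k₂^2)*t = (k₁^2*t + k₁^2*t) - (k₂^2*t + k₂^2*t) by ring]
    simp only [Real.exp_add, Real.exp_sub, Real.exp_neg]
    field_simp
    ring
  -- denominator closed form
  have hht : ∀ t : ℝ,
      Real.exp ((-2*k₂^2)*t) * B' (y - (k₁+k₂)*t) t
      = (k₁*k₂ - ((k₁+k₂)^2/4) * Real.exp (k₁*y - k₂*y))
        + ((k₁*k₂ - ((k₁+k₂)^2/4) * Real.exp (k₂*y - k₁*y))) * Real.exp ((2*k₁^2 - 2*k₂^2)*t)
        - (((k₁-k₂)^2/4) * Real.exp (k₁*y + k₂*y)) * Real.exp ((-2*k₁*k₂ - 2*k₂^2)*t)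
        - (((k₁-k₂)^2/4) * Real.exp (-(k₁*y + k₂*y))) * Real.exp ((2*k₁^2 + 2*k₁*k₂)*t) := by
    intro t
    rw [hB]
    simp only [Real.sinh_eq, Real.cosh_eq]
    rw [show (-2*k₂^2)*t = -(k₂^2*t + k₂^2*t) by ring,
        show 2 * k₁^2 * t = k₁^2*t + k₁^2*t by ring,
        show 2 * k₂^2 * t = k₂^2*t + k₂^2*t by ring,
        show (k₁^2 + k₂^2) * t = k₁^2*t + k₂^2*t by ring,
        show k₁ * (y - (k₁+k₂)*t) = k₁*y - (k₁^2*t + k₁*k₂*t) by ring,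
        show k₂ * (y - (k₁+k₂)*t) = k₂*y - (k₂^2*t + k₁*k₂*t) by ring,
        show (2*k₁^2 - 2*k₂^2)*t = (k₁^2*t + k₁^2*t) - (k₂^2*t + k₂^2*t) by ring,
        show (-2*k₁*k₂ - 2*k₂^2)*t = -(k₁*k₂*t + (k₁*k₂*t + (k₂^2*t + k₂^2*t))) by ring,
        show (2*k₁^2 + 2*k₁*k₂)*t = k₁^2*t + (k₁^2*t + (k₁*k₂*t + k₁*k₂*t)) by ring]
    simp only [Real.exp_add, Real.exp_sub, Real.exp_neg, neg_sub]
    field_simp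
    ring
  -- limits
  have hg : Tendsto (fun t : ℝ => Real.exp ((-2*k₂^2 - k₁*k₂)*t) * A' (y - (k₁+k₂)*t) t) atTop
      (nhds ((1/2)*(k₂^2-k₁^2)*k₁*Real.exp (-(k₂*y)))) := by
    rw [tendsto_congr hgt]
    have H := (((tendsto_const_nhds :
        Tendsto (fun _ : ℝ => (1/2)*(k₂^2-k₁^2)*k₁*Real.exp (-(k₂*y))) atTop _).add
        ((hexp _ hra).const_mul ((1/2)*(k₂^2-k₁^2)*k₁*Real.exp (k₂*y)))).sub
        ((hexp _ hrb).const_mul ((1/2)*(k₂^2-k₁^2)*k₂*Real.exp (-(k₁*y))))).sub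
        ((hexp _ hra).const_mul ((1/2)*(k₂^2-k₁^2)*k₂*Real.exp (k₁*y)))
    simpa using H
  have hh : Tendsto (fun t : ℝ => Real.exp ((-2*k₂^2)*t) * B' (y - (k₁+k₂)*t) t) atTop
      (nhds (k₁*k₂ - ((k₁+k₂)^2/4) * Real.exp (k₁*y - k₂*y))) := by
    rw [tendsto_congr hht]
    have H := (((tendsto_const_nhds :
        Tendsto (fun _ : ℝ => k₁*k₂ - ((k₁+k₂)^2/4) * Real.exp (k₁*y - k₂*y)) atTop _).add
        ((hexp _ hrb).const_mul (k₁*k₂ - ((k₁+k₂)^2/4) * Real.exp (k₂*y - k₁*y)))).sub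
        ((hexp _ hra).const_mul (((k₁-k₂)^2/4) * Real.exp (k₁*y + k₂*y)))).sub
        ((hexp _ hrc).const_mul (((k₁-k₂)^2/4) * Real.exp (-(k₁*y + k₂*y))))
    simpa using H
  have hLden : k₁*k₂ - ((k₁+k₂)^2/4) * Real.exp (k₁*y - k₂*y) < 0 := by
    have := Real.exp_pos (k₁*y - k₂*y)
    nlinarith
  have hdiv := hg.div hh hLden.ne
  -- identify the function
  have heq : ∀ t : ℝ,
      Real.exp (-(k₁ * k₂) * t) * q (y - (k₁ + k₂) * t) t
      = (Real.exp ((-2*k₂^2 - k₁*k₂)*t) * A' (y - (k₁+k₂)*t) t)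
        / (Real.exp ((-2*k₂^2)*t) * B' (y - (k₁+k₂)*t) t) := by
    intro t
    rw [hq, show ((-2*k₂^2 - k₁*k₂)*t : ℝ) = (-2*k₂^2)*t + (-(k₁*k₂))*t by ring, Real.exp_add,
        mul_assoc, mul_div_mul_left _ _ (Real.exp_ne_zero _), ← mul_div_assoc]
  have hfin : Tendsto (fun t : ℝ => Real.exp (-(k₁ * k₂) * t) * q (y - (k₁ + k₂) * t) t) atTop
      (nhds (((1/2)*(k₂^2-k₁^2)*k₁*Real.exp (-(k₂*y)))
        / (k₁*k₂ - ((k₁+k₂)^2/4) * Real.exp (k₁*y - k₂*y)))) :=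
    (tendsto_congr fun t => (heq t).symm).1 hdiv
  have hden2 : (k₁ + k₂)^2 * Real.exp (k₁ * y) - 4 * k₁ * k₂ * Real.exp (k₂ * y) ≠ 0 := by
    have h1 := Real.exp_pos (k₁*y)
    have h2 := Real.exp_pos (k₂*y)
    have : (0:ℝ) < (k₁+k₂)^2 := by positivity
    nlinarith
  have hval : ((1/2)*(k₂^2-k₁^2)*k₁*Real.exp (-(k₂*y)))
        / (k₁*k₂ - ((k₁+k₂)^2/4) * Real.exp (k₁*y - k₂*y))
      = 2 * k₁ * (k₁^2 - k₂^2) /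
          ((k₁ + k₂)^2 * Real.exp (k₁ * y) - 4 * k₁ * k₂ * Real.exp (k₂ * y)) := by
    rw [div_eq_div_iff hLden.ne hden2]
    simp only [Real.exp_sub, Real.exp_neg]
    field_simp
    ring
  rwa [hval] at hfin
end
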